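/- arXiv:1601.06280 — 2 statements merged into one kernel-verified Lean document; each statement's English description precedes it below -/
import Mathlib

section
/- Let U be a basis of an F_q-subspace 𝒰 ⊆ F_{q^m} and let U = A ∪ B be a partition of U into disjoint sets. Then the minimal subspace polynomial satisfies the recursion M_𝒰 = M_{⟨M_{⟨A⟩}(B)⟩} · M_{⟨A⟩}, where M_{⟨A⟩}(B) denotes the image set of B under the evaluation map of M_{⟨A⟩} and ⟨·⟩ denotes the F_q-span. -/
/-!
Evaluation of `M_A` is `F_q`-linear (a combination of powers of the Frobenius) with kernel `⟨A⟩`,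
and `lmul` corresponds to composition. Hence `α` is a root of `M_C · M_A` iff
`M_A(α) ∈ M_A(⟨A ∪ B⟩)`, i.e. `α ∈ ⟨A ∪ B⟩ + ker M_A = ⟨A ∪ B⟩`, and by rank–nullity its q-degree
`dim M_A(⟨A ∪ B⟩) + dim ⟨A⟩` is `dim ⟨A ∪ B⟩`. Such a monic polynomial is unique: the difference
of two of them has q-degree `< d`, so as an ordinary polynomial it has degree `< q^d`, yet it
vanishes on all `q^d` points of the subspace.
-/

open Polynomial

/-- Multiplication of linearized polynomials, in the coefficient representation where the
polynomial `∑ aᵢ Xⁱ` represents the linearized polynomial `∑ aᵢ x^(qⁱ)`: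
`(a·b)ᵢ = ∑_{j≤i} aⱼ (b_{i-j})^(qʲ)`. -/
noncomputable def lmul {F : Type*} [Field F] (q : ℕ) (a b : Polynomial F) : Polynomial F :=
  ∑ i ∈ Finset.range (a.natDegree + b.natDegree + 1),
    Polynomial.C (∑ j ∈ Finset.range (i + 1), a.coeff j * (b.coeff (i - j)) ^ q ^ j) *
      Polynomial.X ^ i

/-- Evaluation of the linearized polynomial represented by `a`: `a(α) = ∑ aᵢ α^(qⁱ)`. -/
noncomputable def leval {F : Type*} [Field F] (q : ℕ) (a : Polynomial F) (α : F) : F :=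
  ∑ i ∈ Finset.range (a.natDegree + 1), a.coeff i * α ^ q ^ i

/-- `M` is the minimal subspace polynomial of the `Fq`-subspace `U` of `F`:
`M` is monic, its q-degree equals `dim U`, and its root space is exactly `U`. -/
def IsMSP (Fq : Type*) {F : Type*} [Field Fq] [Field F] [Algebra Fq F] (q : ℕ)
    (U : Submodule Fq F) (M : Polynomial F) : Prop :=
  M.Monic ∧ M.natDegree = Module.finrank Fq U ∧ ∀ α : F, leval q M α = 0 ↔ α ∈ U

section

variable {F : Type*} [Field F] {q : ℕ}

theorem natDegree_lmul_le (a b : F[X]) : (lmul q a b).natDegree ≤ a.natDegree + b.natDegree :=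
  natDegree_sum_le_of_forall_le _ _ fun _ hi =>
    (natDegree_C_mul_X_pow_le _ _).trans (Nat.lt_succ_iff.mp (Finset.mem_range.mp hi))

theorem coeff_lmul (hq : q ≠ 0) (a b : F[X]) (i : ℕ) :
    (lmul q a b).coeff i = ∑ j ∈ Finset.range (i + 1), a.coeff j * b.coeff (i - j) ^ q ^ j := by
  simp only [lmul, finsetSum_coeff, coeff_C_mul_X_pow, Finset.sum_ite_eq, Finset.mem_range,
    Nat.lt_succ_iff]
  split_ifs with hi
  · rfl
  refine (Finset.sum_eq_zero fun j _ => ?_).symm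
  rcases le_or_gt j a.natDegree with hj | hj
  · rw [coeff_eq_zero_of_natDegree_lt (by omega : b.natDegree < i - j),
      zero_pow (pow_ne_zero _ hq), mul_zero]
  · rw [coeff_eq_zero_of_natDegree_lt hj, zero_mul]

theorem coeff_lmul_natDegree_add (hq : q ≠ 0) (a b : F[X]) :
    (lmul q a b).coeff (a.natDegree + b.natDegree) =
      a.leadingCoeff * b.leadingCoeff ^ q ^ a.natDegree := by
  rw [coeff_lmul hq, Finset.sum_eq_single a.natDegree, Nat.add_sub_cancel_left]
  · rfl
  · intro j _ hj
    rcases lt_or_gt_of_ne hj with hj | hj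
    · rw [coeff_eq_zero_of_natDegree_lt (by omega : b.natDegree < _),
        zero_pow (pow_ne_zero _ hq), mul_zero]
    · rw [coeff_eq_zero_of_natDegree_lt hj, zero_mul]
  · simp

theorem natDegree_lmul (hq : q ≠ 0) {a b : F[X]} (ha : a ≠ 0) (hb : b ≠ 0) :
    (lmul q a b).natDegree = a.natDegree + b.natDegree :=
  natDegree_eq_of_le_of_coeff_ne_zero (natDegree_lmul_le a b) <| by
    rw [coeff_lmul_natDegree_add hq]
    exact mul_ne_zero (leadingCoeff_ne_zero.mpr ha) (pow_ne_zero _ (leadingCoeff_ne_zero.mpr hb))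

theorem monic_lmul (hq : q ≠ 0) {a b : F[X]} (ha : a.Monic) (hb : b.Monic) :
    (lmul q a b).Monic := by
  rw [Monic, leadingCoeff, natDegree_lmul hq ha.ne_zero hb.ne_zero, coeff_lmul_natDegree_add hq,
    ha.leadingCoeff, hb.leadingCoeff, one_pow, one_mul]

theorem leval_eq_sum_range (a : F[X]) (α : F) {n : ℕ} (hn : a.natDegree < n) :
    leval q a α = ∑ i ∈ Finset.range n, a.coeff i * α ^ q ^ i := by
  have hf (i : ℕ) : (0 : F) * α ^ q ^ i = 0 := zero_mul _
  exact (sum_over_range (f := fun i c => c * α ^ q ^ i) a hf).symm.trans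
    (sum_over_range' (f := fun i c => c * α ^ q ^ i) a hf n hn)

noncomputable def linearize (q : ℕ) : F[X] →ₗ[F] F[X] :=
  lsum fun n => monomial (q ^ n)

theorem eval_linearize (a : F[X]) (α : F) : (linearize q a).eval α = leval q a α := by
  simp only [linearize, lsum_apply, eval_sum, eval_monomial]
  exact sum_over_range (f := fun i c => c * α ^ q ^ i) a fun _ => zero_mul _

theorem leval_sub (a b : F[X]) (α : F) : leval q (a - b) α = leval q a α - leval q b α := by
  simp only [← eval_linearize, map_sub, eval_sub]

theorem coeff_linearize_pow (hq : 1 < q) (a : F[X]) (k : ℕ) :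
    (linearize q a).coeff (q ^ k) = a.coeff k := by
  simp only [linearize, lsum_apply, sum_def, finsetSum_coeff, coeff_monomial,
    (Nat.pow_right_injective hq).eq_iff, Finset.sum_ite_eq']
  exact ite_eq_left_iff.mpr fun h => (notMem_support_iff.mp h).symm

theorem linearize_injective (hq : 1 < q) : Function.Injective (linearize (F := F) q) :=
  fun a b h => ext fun k => by rw [← coeff_linearize_pow hq, h, coeff_linearize_pow hq]

theorem natDegree_linearize_le (hq : 0 < q) (a : F[X]) :
    (linearize q a).natDegree ≤ q ^ a.natDegree := by
  simp only [linearize, lsum_apply, sum_def]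
  exact natDegree_sum_le_of_forall_le _ _ fun n hn =>
    (natDegree_monomial_le _).trans (Nat.pow_le_pow_right hq (le_natDegree_of_mem_supp n hn))

theorem eq_zero_of_leval_eq_zero (hq : 1 < q) {a : F[X]} (S : Finset F)
    (hS : ∀ α ∈ S, leval q a α = 0) (hcard : q ^ a.natDegree < S.card) : a = 0 :=
  linearize_injective hq <| by
    rw [map_zero]
    refine eq_zero_of_natDegree_lt_card_of_eval_eq_zero' _ S (fun α hα => ?_) ?_
    · rw [eval_linearize, hS α hα]
    · exact (natDegree_linearize_le (by omega) a).trans_lt hcard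

end

theorem Submodule.finrank_map_add_finrank_ker {K V W : Type*} [DivisionRing K] [AddCommGroup V]
    [Module K V] [AddCommGroup W] [Module K W] (f : V →ₗ[K] W) {U : Submodule K V}
    [FiniteDimensional K U] (hU : LinearMap.ker f ≤ U) :
    Module.finrank K (U.map f) + Module.finrank K (LinearMap.ker f) = Module.finrank K U := by
  rw [← (f.domRestrict U).finrank_range_add_finrank_ker, LinearMap.range_domRestrict,
    LinearMap.ker_domRestrict, (Submodule.comapSubtypeEquivOfLe hU).finrank_eq]

section FiniteField

variable {K L : Type*} [Field K] [Fintype K] [Field L] [Algebra K L]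

local notation "q" => Fintype.card K

theorem FiniteField.frobeniusAlgHom_pow_apply (n : ℕ) (x : L) :
    (FiniteField.frobeniusAlgHom K L ^ n) x = x ^ q ^ n := by
  rw [AlgHom.coe_pow, FiniteField.coe_frobeniusAlgHom, pow_iterate]

variable (K) in
noncomputable def levalLinearMap (a : L[X]) : L →ₗ[K] L :=
  ∑ i ∈ Finset.range (a.natDegree + 1),
    a.coeff i • (FiniteField.frobeniusAlgHom K L ^ i).toLinearMap

theorem coe_levalLinearMap (a : L[X]) : ⇑(levalLinearMap K a) = leval q a := by
  ext α
  simp only [levalLinearMap, LinearMap.sum_apply, LinearMap.smul_apply,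
    AlgHom.toLinearMap_apply, FiniteField.frobeniusAlgHom_pow_apply, smul_eq_mul, _root_.leval]

theorem leval_lmul (a b : L[X]) (α : L) :
    leval q (lmul q a b) α = leval q a (leval q b α) := by
  set N := a.natDegree + b.natDegree + 1
  have hq : q ≠ 0 := Fintype.card_ne_zero
  set f : ℕ → ℕ → L := fun j k => a.coeff j * b.coeff k ^ q ^ j * α ^ q ^ (j + k)
  have hf (j k : ℕ) (h : N ≤ j + k) : f j k = 0 := by
    rcases le_or_gt j a.natDegree with hj | hj
    · simp [f, coeff_eq_zero_of_natDegree_lt (by omega : b.natDegree < k), hq]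
    · simp [f, coeff_eq_zero_of_natDegree_lt hj]
  calc leval q (lmul q a b) α
      = ∑ i ∈ Finset.range N, ∑ j ∈ Finset.range (i + 1), f j (i - j) := by
        rw [leval_eq_sum_range _ _ (Nat.lt_succ_of_le (natDegree_lmul_le a b))]
        refine Finset.sum_congr rfl fun i _ => ?_
        rw [coeff_lmul hq, Finset.sum_mul]
        refine Finset.sum_congr rfl fun j hj => ?_
        simp only [f, Nat.add_sub_cancel' (Nat.lt_succ_iff.mp (Finset.mem_range.mp hj))]
    _ = ∑ j ∈ Finset.range N, ∑ k ∈ Finset.range (N - j), f j k := Finset.sum_range_diag_flip N f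
    _ = ∑ j ∈ Finset.range N, ∑ k ∈ Finset.range N, f j k := by
        refine Finset.sum_congr rfl fun j _ => Finset.sum_subset (by simp) fun k _ hk => hf j k ?_
        simp only [Finset.mem_range] at hk
        omega
    _ = ∑ j ∈ Finset.range N, a.coeff j * leval q b α ^ q ^ j := by
        refine Finset.sum_congr rfl fun j _ => ?_
        rw [leval_eq_sum_range b α (n := N) (by omega),
          ← FiniteField.frobeniusAlgHom_pow_apply (K := K), map_sum, Finset.mul_sum]
        refine Finset.sum_congr rfl fun k _ => ?_
        rw [map_mul, FiniteField.frobeniusAlgHom_pow_apply, FiniteField.frobeniusAlgHom_pow_apply,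
          ← pow_mul, ← pow_add, ← mul_assoc, add_comm k]
    _ = leval q a (leval q b α) := (leval_eq_sum_range a _ (by omega)).symm

theorem IsMSP.ker_levalLinearMap {V : Submodule K L} {M : L[X]} (hM : IsMSP K q V M) :
    LinearMap.ker (levalLinearMap K M) = V := by
  ext α
  rw [LinearMap.mem_ker, coe_levalLinearMap, hM.2.2]

variable [Fintype L]

theorem IsMSP.unique {U : Submodule K L} {M N : L[X]} (hM : IsMSP K q U M)
    (hN : IsMSP K q U N) : M = N := by
  classical
  by_contra hne
  have hdeg : (M - N).natDegree < Module.finrank K U := by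
    rw [← hM.2.1]
    refine natDegree_lt_natDegree (sub_ne_zero.mpr hne) (degree_sub_lt_left ?_ hM.1.ne_zero ?_)
    · rw [degree_eq_natDegree hM.1.ne_zero, degree_eq_natDegree hN.1.ne_zero, hM.2.1, hN.2.1]
    · rw [hM.1.leadingCoeff, hN.1.leadingCoeff]
  refine sub_ne_zero.mpr hne <| eq_zero_of_leval_eq_zero (Fintype.one_lt_card (α := K))
    (U : Set L).toFinset (fun α hα => ?_) ?_
  · rw [Set.mem_toFinset, SetLike.mem_coe] at hα
    rw [leval_sub, (hM.2.2 α).mpr hα, (hN.2.2 α).mpr hα, sub_self]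
  · simp only [Set.toFinset_card, SetLike.coe_sort_coe]
    rw [Module.card_eq_pow_finrank (K := K) (V := U)]
    exact Nat.pow_lt_pow_right (Fintype.one_lt_card (α := K)) hdeg

theorem IsMSP.lmul {V U : Submodule K L} (hVU : V ≤ U) {MV MW : L[X]} (hMV : IsMSP K q V MV)
    (hMW : IsMSP K q (U.map (levalLinearMap K MV)) MW) : IsMSP K q U (lmul q MW MV) := by
  have hker := hMV.ker_levalLinearMap
  refine ⟨monic_lmul Fintype.card_ne_zero hMW.1 hMV.1, ?_, fun α => ?_⟩
  · rw [natDegree_lmul Fintype.card_ne_zero hMW.1.ne_zero hMV.1.ne_zero, hMW.2.1, hMV.2.1, ← hker]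
    exact Submodule.finrank_map_add_finrank_ker _ (hker ▸ hVU)
  · rw [leval_lmul, hMW.2.2, ← coe_levalLinearMap (K := K), ← Submodule.mem_comap,
      Submodule.comap_map_eq, hker, sup_eq_left.mpr hVU]

end FiniteField

theorem msp_recursion_general
    (Fq F : Type*) [Field Fq] [Fintype Fq] [Field F] [Fintype F] [Algebra Fq F]
    (q : ℕ) (hq : q = Fintype.card Fq)
    (A B : Set F)
    (MA MC MU : Polynomial F)
    (hMA : IsMSP Fq q (Submodule.span Fq A) MA)
    (hMC : IsMSP Fq q (Submodule.span Fq ((fun β => leval q MA β) '' B)) MC)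
    (hMU : IsMSP Fq q (Submodule.span Fq (A ∪ B)) MU) :
    MU = lmul q MC MA := by
  subst hq
  have hA : Submodule.span Fq (leval (Fintype.card Fq) MA '' A) = ⊥ :=
    Submodule.span_eq_bot.mpr fun _ ⟨a, ha, hβ⟩ => hβ ▸ (hMA.2.2 a).mpr (Submodule.subset_span ha)
  have hspan : (Submodule.span Fq (A ∪ B)).map (levalLinearMap Fq MA) =
      Submodule.span Fq (leval (Fintype.card Fq) MA '' B) := by
    rw [Submodule.map_span, coe_levalLinearMap, Set.image_union, Submodule.span_union, hA,
      bot_sup_eq]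
  exact hMU.unique (IsMSP.lmul (Submodule.span_mono Set.subset_union_left) hMA (hspan ▸ hMC))

/-- Recursion for the minimal subspace polynomial: if `U = A ∪ B` is a basis of `𝒰`
partitioned into disjoint sets `A` and `B`, then
`M_𝒰 = M_⟨M_⟨A⟩(B)⟩ · M_⟨A⟩`. -/
theorem msp_recursion
    (Fq F : Type*) [Field Fq] [Fintype Fq] [Field F] [Fintype F] [Algebra Fq F]
    (q : ℕ) (hq : q = Fintype.card Fq)
    (A B : Set F) (hAB : Disjoint A B)
    (hli : LinearIndependent Fq (fun x : ↥(A ∪ B) => (x : F)))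
    (MA MC MU : Polynomial F)
    (hMA : IsMSP Fq q (Submodule.span Fq A) MA)
    (hMC : IsMSP Fq q (Submodule.span Fq ((fun β => leval q MA β) '' B)) MC)
    (hMU : IsMSP Fq q (Submodule.span Fq (A ∪ B)) MU) :
    MU = lmul q MC MA :=
  msp_recursion_general Fq F q hq A B MA MC MU hMA hMC hMU
end

section
/- The Gabidulin code Gab[n,k] over F_{q^m} with n ≤ m achieves minimum rank distance d_R = n − k + 1 (it is maximum rank distance): any nonzero codeword (f(g_1),…,f(g_n)), with f a nonzero linearized polynomial of q-degree < k, has rank weight at least n − k + 1, where the rank weight of v ∈ F_{q^m}^n is the F_q-dimension of the span of its entries. -/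
/-!
Since `x ↦ x ^ q` is the Frobenius of `F` over `F_q`, the evaluation `x ↦ ∑ aᵢ x^(qⁱ)` of a
linearized polynomial is `F_q`-linear. Its kernel is an `F_q`-subspace of roots of the ordinary
polynomial `∑ aᵢ X^(qⁱ)`, of degree `q ^ deg_q f`, so `q ^ dim ker ≤ q ^ deg_q f`, i.e. the kernel
has dimension at most `deg_q f ≤ k - 1`. Rank–nullity on the `n`-dimensional span of the `gᵢ`
then bounds the dimension of the image, the span of the codeword's entries, below by `n - k + 1`.
-/

open Polynomial

open Module

theorem Submodule.finrank_le_finrank_map_add_finrank_ker {K V W : Type*} [Field K]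
    [AddCommGroup V] [Module K V] [FiniteDimensional K V] [AddCommGroup W] [Module K W]
    (φ : V →ₗ[K] W) (U : Submodule K V) :
    finrank K U ≤ finrank K (U.map φ) + finrank K (LinearMap.ker φ) := by
  have hker : finrank K (LinearMap.ker (φ.domRestrict U)) ≤ finrank K (LinearMap.ker φ) := by
    rw [← Submodule.finrank_map_subtype_eq, LinearMap.ker_domRestrict]
    exact Submodule.finrank_mono (Submodule.map_comap_le _ _)
  have := (φ.domRestrict U).finrank_range_add_finrank_ker
  rw [LinearMap.range_domRestrict] at this
  omega

theorem Submodule.card_pow_finrank_le_natDegree {K L : Type*} [Field K] [Fintype K] [Field L]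
    [Algebra K L] {P : L[X]} (hP : P ≠ 0) (V : Submodule K L) (hV : ∀ x ∈ V, P.IsRoot x) :
    Fintype.card K ^ finrank K V ≤ P.natDegree := by
  classical
  have hsub : (V : Set L) ⊆ P.roots.toFinset := fun x hx => by
    simpa [mem_roots hP] using hV x hx
  have : Finite V := (P.roots.toFinset.finite_toSet.subset hsub).to_subtype
  calc Fintype.card K ^ finrank K V = Nat.card V := by
        rw [natCard_eq_pow_finrank (K := K), Nat.card_eq_fintype_card]
    _ ≤ Nat.card (P.roots.toFinset : Set L) := Nat.card_mono (Finset.finite_toSet _) hsub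
    _ = P.roots.toFinset.card := Nat.card_coe_set_eq _ |>.trans (Set.ncard_coe_finset _)
    _ ≤ P.roots.card := Multiset.toFinset_card_le _
    _ ≤ P.natDegree := card_roots' P

noncomputable def linearizedPoly {F : Type*} [Field F] (q : ℕ) (f : F[X]) : F[X] :=
  ∑ i ∈ Finset.range (f.natDegree + 1), C (f.coeff i) * X ^ q ^ i

section linearizedPoly

variable {F : Type*} [Field F] {q : ℕ} (f : F[X])

theorem eval_linearizedPoly (x : F) : (linearizedPoly q f).eval x = leval q f x := by
  simp [linearizedPoly, _root_.leval, eval_finsetSum]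

theorem natDegree_linearizedPoly_le (hq : 0 < q) :
    (linearizedPoly q f).natDegree ≤ q ^ f.natDegree :=
  natDegree_sum_le_of_forall_le _ _ fun i hi => (natDegree_C_mul_le _ _).trans <| by
    rw [natDegree_X_pow]
    exact Nat.pow_le_pow_right hq (Nat.lt_succ_iff.mp (Finset.mem_range.mp hi))

theorem coeff_linearizedPoly_pow (hq : 1 < q) {j : ℕ} (hj : j ≤ f.natDegree) :
    (linearizedPoly q f).coeff (q ^ j) = f.coeff j := by
  rw [linearizedPoly, finsetSum_coeff, Finset.sum_eq_single j]
  · simp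
  · intro i _ hij
    rw [coeff_C_mul, coeff_X_pow, if_neg fun h => hij (Nat.pow_right_injective hq h).symm, mul_zero]
  · exact fun h => absurd (Finset.mem_range_succ_iff.mpr hj) h

theorem linearizedPoly_ne_zero (hq : 1 < q) (hf : f ≠ 0) : linearizedPoly q f ≠ 0 := fun h => by
  have := coeff_linearizedPoly_pow f hq le_rfl
  rw [h, coeff_zero] at this
  exact leadingCoeff_ne_zero.mpr hf this.symm

end linearizedPoly

namespace FiniteField

variable (K : Type*) {L : Type*} [Field K] [Fintype K] [Field L] [Algebra K L]

noncomputable def linearizedMap (f : L[X]) : L →ₗ[K] L :=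
  ∑ i ∈ Finset.range (f.natDegree + 1),
    LinearMap.mulLeft K (f.coeff i) ∘ₗ (frobeniusAlgHom K L ^ i).toLinearMap

theorem linearizedMap_apply (f : L[X]) (x : L) :
    linearizedMap K f x = leval (Fintype.card K) f x := by
  simp [linearizedMap, _root_.leval, AlgHom.coe_pow, coe_frobeniusAlgHom, pow_iterate]

theorem finrank_ker_linearizedMap_le {f : L[X]} (hf : f ≠ 0) :
    finrank K (LinearMap.ker (linearizedMap K f)) ≤ f.natDegree := by
  have hq : 1 < Fintype.card K := Fintype.one_lt_card
  refine (Nat.pow_le_pow_iff_right hq).mp ?_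
  calc Fintype.card K ^ finrank K (LinearMap.ker (linearizedMap K f))
      ≤ (linearizedPoly (Fintype.card K) f).natDegree :=
        Submodule.card_pow_finrank_le_natDegree (linearizedPoly_ne_zero f hq hf) _ fun x hx => by
          rw [IsRoot, eval_linearizedPoly, ← linearizedMap_apply]
          exact hx
    _ ≤ Fintype.card K ^ f.natDegree := natDegree_linearizedPoly_le f (by omega)

end FiniteField

theorem gabidulin_code_mrd_general
    (Fq F : Type*) [Field Fq] [Fintype Fq] [Field F] [Fintype F] [Algebra Fq F]
    (q : ℕ) (hq : q = Fintype.card Fq)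
    (n k : ℕ) (hk : k ≤ n)
    (g : Fin n → F) (hg : LinearIndependent Fq g)
    (f : Polynomial F) (hf : f ≠ 0) (hfd : f.degree < (k : ℕ)) :
    n - k + 1 ≤
      Module.finrank Fq (Submodule.span Fq (Set.range fun i : Fin n => leval q f (g i))) := by
  subst hq
  have hdeg : f.natDegree < k := (natDegree_lt_iff_degree_lt hf).mpr hfd
  have hspan : Submodule.span Fq (Set.range fun i => leval (Fintype.card Fq) f (g i)) =
      (Submodule.span Fq (Set.range g)).map (FiniteField.linearizedMap Fq f) := by
    simp only [Submodule.map_span, ← Set.range_comp, Function.comp_def,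
      FiniteField.linearizedMap_apply]
  have hrank := Submodule.finrank_le_finrank_map_add_finrank_ker (FiniteField.linearizedMap Fq f)
    (Submodule.span Fq (Set.range g))
  rw [finrank_span_eq_card hg, Fintype.card_fin, ← hspan] at hrank
  have hker := FiniteField.finrank_ker_linearizedMap_le Fq hf
  omega

/-- Gabidulin codes are MRD: any nonzero codeword `(f(g₁),…,f(g_n))`, with `f ≠ 0` of
q-degree `< k`, has rank weight (the `F_q`-dimension of the span of its entries) at
least `n - k + 1`; hence the minimum rank distance is `n - k + 1`. -/
theorem gabidulin_code_mrd
    (Fq F : Type*) [Field Fq] [Fintype Fq] [Field F] [Fintype F] [Algebra Fq F]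
    (q : ℕ) (hq : q = Fintype.card Fq)
    (n k : ℕ) (hk : k ≤ n) (hn : n ≤ Module.finrank Fq F)
    (g : Fin n → F) (hg : LinearIndependent Fq g)
    (f : Polynomial F) (hf : f ≠ 0) (hfd : f.degree < (k : ℕ)) :
    n - k + 1 ≤
      Module.finrank Fq (Submodule.span Fq (Set.range fun i : Fin n => leval q f (g i))) :=
  gabidulin_code_mrd_general Fq F q hq n k hk g hg f hf hfd
end
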